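/- If ω₁, ω₂, ω₃ > 0 satisfy ωᵢ ≤ 2/7 for i = 1,2,3 and ω₁ + ω₂ + ω₃ < 1, then setting αᵢ = arcsin(√(7ωᵢ/2)) yields (1/7)·X Xᵀ = diag(ω₁, ω₂, ω₃, 1 − ω₁ − ω₂ − ω₃), where X is the 7-sample matrix determined by α₁, α₂, α₃. -/

import Mathlib

open Matrix Real

noncomputable def sampleX (α₁ α₂ α₃ : ℝ) : Matrix (Fin 4) (Fin 7) ℝ :=
  Matrix.of
    ![![0, Real.sin α₁, -Real.sin α₁, 0, 0, 0, 0],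
      ![0, 0, 0, Real.sin α₂, -Real.sin α₂, 0, 0],
      ![0, 0, 0, 0, 0, Real.sin α₃, -Real.sin α₃],
      ![1, Real.cos α₁, Real.cos α₁, Real.cos α₂, Real.cos α₂, Real.cos α₃, Real.cos α₃]]

/-!
The rows of the sample matrix are orthogonal: the `±sin αᵢ` entries of row `i` cancel against
the equal `cos αᵢ` entries of the last row, and rows `i ≠ j < 3` have disjoint supports. So
`X Xᵀ` is diagonal with entries `2 sin² αᵢ` and `1 + 2 ∑ cos² αᵢ`. The choice
`sin² αᵢ = 7ωᵢ/2` makes the first three `7ωᵢ`, and then `cos² αᵢ = 1 - 7ωᵢ/2` makes the last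
one `7 (1 - ω₁ - ω₂ - ω₃)`.
-/

theorem sampleX_mul_transpose (α₁ α₂ α₃ : ℝ) :
    sampleX α₁ α₂ α₃ * (sampleX α₁ α₂ α₃)ᵀ =
      diagonal ![2 * sin α₁ ^ 2, 2 * sin α₂ ^ 2, 2 * sin α₃ ^ 2,
        1 + 2 * (cos α₁ ^ 2 + cos α₂ ^ 2 + cos α₃ ^ 2)] := by
  ext i j
  fin_cases i <;> fin_cases j <;>
    simp [sampleX, mul_apply, Fin.sum_univ_seven] <;> ring

theorem sin_sq_arcsin_sqrt {x : ℝ} (h₀ : 0 ≤ x) (h₁ : x ≤ 1) : sin (arcsin √x) ^ 2 = x := by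
  rw [sin_arcsin (by linarith [sqrt_nonneg x]) (sqrt_le_one.mpr h₁), sq_sqrt h₀]

theorem cos_sq_arcsin_sqrt {x : ℝ} (h₀ : 0 ≤ x) (h₁ : x ≤ 1) :
    cos (arcsin √x) ^ 2 = 1 - x := by
  rw [cos_sq', sin_sq_arcsin_sqrt h₀ h₁]

theorem sample_matching_covariance_general (ω₁ ω₂ ω₃ : ℝ)
    (h₁ : 0 < ω₁) (h₂ : 0 < ω₂) (h₃ : 0 < ω₃)
    (hb₁ : ω₁ ≤ 2 / 7) (hb₂ : ω₂ ≤ 2 / 7) (hb₃ : ω₃ ≤ 2 / 7) :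
    (1 / 7 : ℝ) • (sampleX (Real.arcsin (Real.sqrt (7 * ω₁ / 2)))
        (Real.arcsin (Real.sqrt (7 * ω₂ / 2))) (Real.arcsin (Real.sqrt (7 * ω₃ / 2)))
      * (sampleX (Real.arcsin (Real.sqrt (7 * ω₁ / 2)))
        (Real.arcsin (Real.sqrt (7 * ω₂ / 2))) (Real.arcsin (Real.sqrt (7 * ω₃ / 2))))ᵀ)
      = Matrix.diagonal ![ω₁, ω₂, ω₃, 1 - ω₁ - ω₂ - ω₃] := by
  have hs₁ := sin_sq_arcsin_sqrt (x := 7 * ω₁ / 2) (by positivity) (by linarith)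
  have hs₂ := sin_sq_arcsin_sqrt (x := 7 * ω₂ / 2) (by positivity) (by linarith)
  have hs₃ := sin_sq_arcsin_sqrt (x := 7 * ω₃ / 2) (by positivity) (by linarith)
  have hc₁ := cos_sq_arcsin_sqrt (x := 7 * ω₁ / 2) (by positivity) (by linarith)
  have hc₂ := cos_sq_arcsin_sqrt (x := 7 * ω₂ / 2) (by positivity) (by linarith)
  have hc₃ := cos_sq_arcsin_sqrt (x := 7 * ω₃ / 2) (by positivity) (by linarith)
  rw [sampleX_mul_transpose, hs₁, hs₂, hs₃, hc₁, hc₂, hc₃, ← diagonal_smul]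
  congr 1
  ext i
  fin_cases i <;> simp <;> ring

theorem sample_matching_covariance (ω₁ ω₂ ω₃ : ℝ)
    (h₁ : 0 < ω₁) (h₂ : 0 < ω₂) (h₃ : 0 < ω₃)
    (hb₁ : ω₁ ≤ 2 / 7) (hb₂ : ω₂ ≤ 2 / 7) (hb₃ : ω₃ ≤ 2 / 7)
    (hsum : ω₁ + ω₂ + ω₃ < 1) :
    (1 / 7 : ℝ) • (sampleX (Real.arcsin (Real.sqrt (7 * ω₁ / 2)))
        (Real.arcsin (Real.sqrt (7 * ω₂ / 2))) (Real.arcsin (Real.sqrt (7 * ω₃ / 2)))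
      * (sampleX (Real.arcsin (Real.sqrt (7 * ω₁ / 2)))
        (Real.arcsin (Real.sqrt (7 * ω₂ / 2))) (Real.arcsin (Real.sqrt (7 * ω₃ / 2))))ᵀ)
      = Matrix.diagonal ![ω₁, ω₂, ω₃, 1 - ω₁ - ω₂ - ω₃] :=
  sample_matching_covariance_general ω₁ ω₂ ω₃ h₁ h₂ h₃ hb₁ hb₂ hb₃
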